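/- arXiv:hep-th/9305180 — 4 statements merged into one kernel-verified Lean document; each statement's English description precedes it below -/
import Mathlib

section
/- Let n ≥ 2, K a field, p ∈ K invertible, q := p^n with q² ≠ 1. Let A be a unital associative K-algebra containing elements e_i, f_i and invertible t_i (1 ≤ i ≤ n−1) satisfying the defining relations of U_q(A_{n−1}) (Cartan matrix a_{ii} = 2, a_{i,i±1} = −1, all other entries 0, all d_i = 1). Suppose A also contains invertible, pairwise commuting elements s_1,…,s_{n−1} which commute with every t_j and satisfy s_i^n = t_i^{−i}, s_i e_j = p^{−i·a_{ij}} e_j s_i and s_i f_j = p^{i·a_{ij}} f_j s_i for all 1 ≤ i, j ≤ n−1. Fix c ∈ K nonzero and set F_i := f_i, E_i := e_i, T_i := t_i for 1 ≤ i ≤ n−1, E_n := 0 and T_n := c·s_1 s_2 ⋯ s_{n−1}. Then these elements satisfy every defining relation of U_q(A_n) involving only F_1,…,F_{n−1}, E_1,…,E_n, T_1^{±1},…,T_n^{±1} (i.e., all relations of U_q(A_n) except those involving f_n); in particular T_n is invertible and commutes with every T_i, T_n E_j = q^{a_{nj}} E_j T_n and T_n F_j = q^{−a_{nj}} F_j T_n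 for 1 ≤ j ≤ n−1 (where a_{nj} = −1 if j = n−1 and 0 otherwise), T_j E_n = E_n T_j, E_n F_j = F_j E_n, and all quantum Serre relations among E_1,…,E_n hold. -/
open scoped BigOperators

noncomputable section

variable {K : Type*} [Field K] {A : Type*} [Ring A] [Algebra K A]

/-- The `t`-integer `[m]_t = (t^m - t^(-m))/(t - t⁻¹)`. -/
def qint (t : K) (m : ℤ) : K := (t ^ m - t ^ (-m)) / (t - t⁻¹)

/-- The `t`-factorial `[m]_t!`. -/
def qfact (t : K) (m : ℕ) : K := ∏ j ∈ Finset.range m, qint t ((j : ℤ) + 1)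

/-- The `t`-binomial coefficient `C(m,k)_t`. -/
def qbinom (t : K) (m k : ℕ) : K := qfact t m / (qfact t k * qfact t (m - k))

/-- The curly bracket `{u}_t = (u - u⁻¹)/(t - t⁻¹)` of a unit `u`. -/
def curly (t : K) (u : Aˣ) : A :=
  algebraMap K A (t - t⁻¹)⁻¹ * ((u : A) - ((u⁻¹ : Aˣ) : A))

/-- The defining relations of the quantum group attached to the Cartan matrix `a`
(with indices `1, …, n` and symmetrizers `d_i` encoded by `q^{d_i} = p^{D i}`),
for elements `e i`, `f i` and units `t i` of an associative `K`-algebra `A`: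
commutation of the `t i`, the `t`–`e` and `t`–`f` relations, the
`[e_i, f_j] = δ_{ij} (t_i - t_i⁻¹)/(q^{d_i} - q^{-d_i})` relations and the quantum
Serre relations among the `e`'s and among the `f`'s.  Relations involving `f j` are
imposed only for indices `j` satisfying `S j`; taking `S := fun _ => True` gives the
full set of defining relations, while e.g. `S := fun j => j ≠ n` gives exactly those
defining relations which involve only the generators
`e_1, …, e_n`, `t_1^{±1}, …, t_n^{±1}` and `f_1, …, f_{n-1}`. -/
def UqRels (p : K) (n : ℕ) (a : ℕ → ℕ → ℤ) (D : ℕ → ℤ)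
    (e f : ℕ → A) (t : ℕ → Aˣ) (S : ℕ → Prop) : Prop :=
  (∀ i j, 1 ≤ i → i ≤ n → 1 ≤ j → j ≤ n →
    (t i : A) * (t j : A) = (t j : A) * (t i : A)) ∧
  (∀ i j, 1 ≤ i → i ≤ n → 1 ≤ j → j ≤ n →
    (t i : A) * e j = algebraMap K A (p ^ (D i * a i j)) * (e j * (t i : A))) ∧
  (∀ i j, 1 ≤ i → i ≤ n → 1 ≤ j → j ≤ n → S j →
    (t i : A) * f j = algebraMap K A (p ^ (-(D i * a i j))) * (f j * (t i : A))) ∧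
  (∀ i, 1 ≤ i → i ≤ n → S i →
    e i * f i - f i * e i
      = algebraMap K A ((p ^ D i - p ^ (-D i))⁻¹) * ((t i : A) - (((t i)⁻¹ : Aˣ) : A))) ∧
  (∀ i j, 1 ≤ i → i ≤ n → 1 ≤ j → j ≤ n → S j → i ≠ j → e i * f j = f j * e i) ∧
  (∀ i j, 1 ≤ i → i ≤ n → 1 ≤ j → j ≤ n → i ≠ j →
    ∑ v ∈ Finset.range ((1 - a i j).toNat + 1),
      algebraMap K A ((-1 : K) ^ v * qbinom (p ^ D i) (1 - a i j).toNat v) *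
        (e i ^ ((1 - a i j).toNat - v) * e j * e i ^ v) = 0) ∧
  (∀ i j, 1 ≤ i → i ≤ n → 1 ≤ j → j ≤ n → S i → S j → i ≠ j →
    ∑ v ∈ Finset.range ((1 - a i j).toNat + 1),
      algebraMap K A ((-1 : K) ^ v * qbinom (p ^ D i) (1 - a i j).toNat v) *
        (f i ^ ((1 - a i j).toNat - v) * f j * f i ^ v) = 0)

/-- A family of units extended by `1` outside the index range `[lo, hi]`
(the convention `z_k = 1` for an out-of-range index `k`). -/
def ubz (lo hi : ℕ) (z : ℕ → Aˣ) (k : ℕ) : Aˣ := if lo ≤ k ∧ k ≤ hi then z k else 1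

/-- Underlying elements of a family of units, extended by `1` outside `[lo, hi]`. -/
def ubx (lo hi : ℕ) (x : ℕ → Aˣ) (k : ℕ) : A := if lo ≤ k ∧ k ≤ hi then (x k : A) else 1

/-- Inverses of a family of units, extended by `0` outside `[lo, hi]`
(the convention `x_k⁻¹ = 0` for an out-of-range index `k`). -/
def ubxi (lo hi : ℕ) (x : ℕ → Aˣ) (k : ℕ) : A :=
  if lo ≤ k ∧ k ≤ hi then (((x k)⁻¹ : Aˣ) : A) else 0

/-- A family of algebra elements extended by `0` outside `[lo, hi]`
(the conventions `F_0 = 0`, `F_n = 0`). -/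
def ubf (lo hi : ℕ) (F : ℕ → A) (k : ℕ) : A := if lo ≤ k ∧ k ≤ hi then F k else 0

/-- The Cartan matrix of type `A_n` (indices `1, …, n`). -/
def cartanA (i j : ℕ) : ℤ :=
  if i = j then 2 else if i + 1 = j ∨ j + 1 = i then -1 else 0


lemma central_shuffle (α : K) (y z : A) :
    y * (algebraMap K A α * z) = algebraMap K A α * (y * z) := by
  rw [← mul_assoc, ← Algebra.commutes, mul_assoc]

lemma sumA_aux (j : ℕ) (hj : 1 ≤ j) (m : ℕ) :
    ∑ k ∈ Finset.range m, ((k : ℤ) + 1) * cartanA (k + 1) j =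
      if m + 2 ≤ j then 0 else if m + 1 = j then 1 - (j : ℤ)
      else if m = j then (j : ℤ) + 1 else 0 := by
  induction m with
  | zero => simp only [Finset.range_zero, Finset.sum_empty]; split_ifs <;> omega
  | succ m ih =>
    rw [Finset.sum_range_succ, ih]
    simp only [cartanA]
    split_ifs <;> push_cast <;> omega

lemma units_prod_comm_pow (p : K) (hp : p ≠ 0) (z : ℕ → Aˣ) (a : ℕ → ℤ) (x : A) :
    ∀ m, (∀ k, k < m → (z k : A) * x = algebraMap K A (p ^ a k) * (x * (z k : A))) →
    ((((List.range m).map z).prod : Aˣ) : A) * x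
      = algebraMap K A (p ^ ∑ k ∈ Finset.range m, a k) *
          (x * ((((List.range m).map z).prod : Aˣ) : A)) := by
  intro m
  induction m with
  | zero => intro _; simp
  | succ m ih =>
    intro h
    rw [List.range_succ, List.map_append, List.prod_append]
    simp only [List.map_cons, List.map_nil, List.prod_cons, List.prod_nil, mul_one,
      Units.val_mul]
    have hzm := h m (Nat.lt_succ_self m)
    have hP := ih (fun k hk => h k (hk.trans (Nat.lt_succ_self m)))
    calc ((((List.range m).map z).prod : Aˣ) : A) * (z m : A) * x
        = ((((List.range m).map z).prod : Aˣ) : A) * ((z m : A) * x) := by rw [mul_assoc]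
      _ = ((((List.range m).map z).prod : Aˣ) : A) *
            (algebraMap K A (p ^ a m) * (x * (z m : A))) := by rw [hzm]
      _ = algebraMap K A (p ^ a m) *
            (((((List.range m).map z).prod : Aˣ) : A) * x * (z m : A)) := by
            rw [central_shuffle, mul_assoc]
      _ = algebraMap K A (p ^ a m) *
            (algebraMap K A (p ^ ∑ k ∈ Finset.range m, a k) *
              (x * ((((List.range m).map z).prod : Aˣ) : A)) * (z m : A)) := by rw [hP]
      _ = algebraMap K A (p ^ ∑ k ∈ Finset.range (m+1), a k) *
            (x * (((((List.range m).map z).prod : Aˣ) : A) * (z m : A))) := by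
            rw [Finset.sum_range_succ, zpow_add₀ hp, map_mul, mul_assoc,
              mul_assoc, mul_assoc, ← mul_assoc (algebraMap K A (p ^ a m)),
              ← map_mul, mul_comm (p ^ a m), map_mul, mul_assoc]

/-- Lemma 1, `A` case: given a representation of `U_q(A_{n-1})` (`q = pⁿ`) together
with commuting invertible elements `s_i` with `s_iⁿ = t_i^{-i}`,
`s_i e_j = p^{-i a_{ij}} e_j s_i`, `s_i f_j = p^{i a_{ij}} f_j s_i`, the elements
`F_i := f_i`, `E_i := e_i`, `T_i := t_i` (`i ≤ n-1`), `E_n := 0` and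
`T_n := c·s_1⋯s_{n-1}` satisfy all defining relations of `U_q(A_n)` not
involving `f_n`. -/
theorem barUqAn_from_UqAnm1
    (n : ℕ) (hn : 2 ≤ n) (p : K) (hp : p ≠ 0) (hq2 : (p ^ n) ^ 2 ≠ 1)
    (e f : ℕ → A) (t : ℕ → Aˣ)
    (hrel : UqRels (p ^ n) (n - 1) cartanA (fun _ => 1) e f t (fun _ => True))
    (s : ℕ → Aˣ)
    (hss : ∀ i j, 1 ≤ i → i ≤ n - 1 → 1 ≤ j → j ≤ n - 1 →
      (s i : A) * (s j : A) = (s j : A) * (s i : A))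
    (hst : ∀ i j, 1 ≤ i → i ≤ n - 1 → 1 ≤ j → j ≤ n - 1 →
      (s i : A) * (t j : A) = (t j : A) * (s i : A))
    (hsn : ∀ i, 1 ≤ i → i ≤ n - 1 → (s i) ^ n = (t i) ^ (-(i : ℤ)))
    (hse : ∀ i j, 1 ≤ i → i ≤ n - 1 → 1 ≤ j → j ≤ n - 1 →
      (s i : A) * e j = algebraMap K A (p ^ (-((i : ℤ) * cartanA i j))) * (e j * (s i : A)))
    (hsf : ∀ i j, 1 ≤ i → i ≤ n - 1 → 1 ≤ j → j ≤ n - 1 →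
      (s i : A) * f j = algebraMap K A (p ^ ((i : ℤ) * cartanA i j)) * (f j * (s i : A)))
    (c : K) (hc : c ≠ 0) :
    UqRels (p ^ n) n cartanA (fun _ => 1)
      (fun i => if i = n then 0 else e i) f
      (fun i => if i = n then
          Units.map (algebraMap K A).toMonoidHom (Units.mk0 c hc) *
            ((List.range (n - 1)).map fun k => s (k + 1)).prod
        else t i)
      (fun j => j ≠ n) := by
  obtain ⟨h1, h2, h3, h4, h5, h6, h7⟩ := hrel
  have hcan : ∀ j, 1 ≤ j → j ≤ n → n ≠ j → cartanA n j = if j + 1 = n then -1 else 0 := by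
    intro j hj1 hj2 hnj
    simp only [cartanA]
    split_ifs <;> omega
  have hsum : ∀ j, 1 ≤ j → j ≤ n - 1 →
      ∑ k ∈ Finset.range (n - 1), ((k : ℤ) + 1) * cartanA (k + 1) j
        = -((n : ℤ) * cartanA n j) := by
    intro j hj1 hj2
    rw [sumA_aux j hj1, hcan j hj1 (by omega) (by omega)]
    split_ifs <;> push_cast <;> omega
  set Pu : Aˣ := ((List.range (n - 1)).map fun k => s (k + 1)).prod with hPu
  have hPe : ∀ j, 1 ≤ j → j ≤ n - 1 →
      (Pu : A) * e j = algebraMap K A (p ^ ((n : ℤ) * cartanA n j)) * (e j * (Pu : A)) := by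
    intro j hj1 hj2
    have := units_prod_comm_pow p hp (fun k => s (k + 1))
      (fun k => -(((k : ℤ) + 1) * cartanA (k + 1) j)) (e j) (n - 1) (fun k hk => by
        have := hse (k + 1) j (by omega) (by omega) hj1 hj2
        rw [this]; push_cast; ring_nf)
    rw [hPu, this, Finset.sum_neg_distrib, hsum j hj1 hj2, neg_neg]
  have hPf : ∀ j, 1 ≤ j → j ≤ n - 1 →
      (Pu : A) * f j = algebraMap K A (p ^ (-((n : ℤ) * cartanA n j))) * (f j * (Pu : A)) := by
    intro j hj1 hj2
    have := units_prod_comm_pow p hp (fun k => s (k + 1))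
      (fun k => ((k : ℤ) + 1) * cartanA (k + 1) j) (f j) (n - 1) (fun k hk => by
        have := hsf (k + 1) j (by omega) (by omega) hj1 hj2
        rw [this]; push_cast; ring_nf)
    rw [hPu, this, hsum j hj1 hj2]
  have hPt : ∀ j, 1 ≤ j → j ≤ n - 1 → (Pu : A) * (t j : A) = (t j : A) * (Pu : A) := by
    intro j hj1 hj2
    have := units_prod_comm_pow p hp (fun k => s (k + 1))
      (fun _ => (0 : ℤ)) ((t j : A)) (n - 1) (fun k hk => by
        rw [zpow_zero, map_one, one_mul]
        exact hst (k + 1) j (by omega) (by omega) hj1 hj2)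
    rw [hPu, this]
    simp
  set Tn : Aˣ := Units.map (algebraMap K A).toMonoidHom (Units.mk0 c hc) * Pu with hTn
  have hTnc : (Tn : A) = algebraMap K A c * (Pu : A) := by
    rw [hTn, Units.val_mul]
    rfl
  have hTx : ∀ (x : A) (w : K),
      (Pu : A) * x = algebraMap K A w * (x * (Pu : A)) →
      (Tn : A) * x = algebraMap K A w * (x * (Tn : A)) := by
    intro x w hPx
    rw [hTnc, mul_assoc, hPx]
    conv_rhs => rw [central_shuffle]
    rw [← mul_assoc, ← map_mul, mul_comm c w, map_mul, mul_assoc]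
  have hqz : ∀ z : ℤ, ((p ^ n : K)) ^ z = p ^ ((n : ℤ) * z) := by
    intro z
    rw [← zpow_natCast p n, ← zpow_mul]
  refine ⟨?_, ?_, ?_, ?_, ?_, ?_, ?_⟩
  · -- t-t commutation
    intro i j hi1 hin hj1 hjn
    by_cases hi : i = n <;> by_cases hj : j = n
    · simp [hi, hj]
    · simp only [hi, if_pos, if_neg hj]
      have := hTx (t j : A) (p ^ (0 : ℤ)) (by
        rw [zpow_zero, map_one, one_mul]; exact hPt j hj1 (by omega))
      rw [this]
      simp
    · simp only [hj, if_pos, if_neg hi]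
      have := hTx (t i : A) (p ^ (0 : ℤ)) (by
        rw [zpow_zero, map_one, one_mul]; exact hPt i hi1 (by omega))
      rw [this]
      simp
    · simp only [if_neg hi, if_neg hj]
      exact h1 i j hi1 (by omega) hj1 (by omega)
  · -- t-e
    intro i j hi1 hin hj1 hjn
    by_cases hj : j = n
    · simp [hj]
    · by_cases hi : i = n
      · simp only [hi, if_pos, if_neg hj]
        rw [hqz, one_mul]
        exact hTx (e j) (p ^ ((n : ℤ) * cartanA n j)) (hPe j hj1 (by omega))
      · simp only [if_neg hi, if_neg hj]
        exact h2 i j hi1 (by omega) hj1 (by omega)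
  · -- t-f
    intro i j hi1 hin hj1 hjn hSj
    by_cases hi : i = n
    · simp only [hi, if_pos]
      have : ((p ^ n : K)) ^ (-(1 * cartanA n j)) = p ^ (-((n : ℤ) * cartanA n j)) := by
        rw [hqz]; congr 1; ring
      rw [this]
      exact hTx (f j) (p ^ (-((n : ℤ) * cartanA n j))) (hPf j hj1 (by omega))
    · simp only [if_neg hi]
      exact h3 i j hi1 (by omega) hj1 (by omega) trivial
  · -- e f commutator
    intro i hi1 hin hSi
    simp only [if_neg hSi]
    exact h4 i hi1 (by omega) trivial
  · -- e f commute
    intro i j hi1 hin hj1 hjn hSj hij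
    by_cases hi : i = n
    · simp [hi]
    · simp only [if_neg hi]
      exact h5 i j hi1 (by omega) hj1 (by omega) trivial hij
  · -- Serre e
    intro i j hi1 hin hj1 hjn hij
    by_cases hi : i = n
    · subst hi
      apply Finset.sum_eq_zero
      intro v hv
      have hm : (1 - cartanA i j).toNat ≠ 0 := by
        have : cartanA i j ≤ 0 := by
          rw [hcan j hj1 hjn hij]
          split_ifs <;> omega
        omega
      simp only [if_pos]
      rcases Nat.eq_zero_or_pos v with hv0 | hv0
      · subst hv0
        rw [Nat.sub_zero, zero_pow hm]
        simp
      · rw [zero_pow (by omega : v ≠ 0)]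
        simp
    · by_cases hj : j = n
      · apply Finset.sum_eq_zero
        intro v hv
        simp [hj]
      · simp only [if_neg hi, if_neg hj]
        exact h6 i j hi1 (by omega) hj1 (by omega) hij
  · -- Serre f
    intro i j hi1 hin hj1 hjn hSi hSj hij
    exact h7 i j hi1 (by omega) hj1 (by omega) trivial trivial hij
end
end

section
/- Let n ≥ 3, K a field, p ∈ K invertible with q := p² and q² ≠ 1. Let A be a unital associative K-algebra containing elements e_i, f_i and invertible t_i (1 ≤ i ≤ n−1) satisfying the defining relations of U_q(B_{n−1}), where B_{n−1} has Cartan data a_{ii} = 2, a_{12} = −2, a_{21} = −1, a_{i,i+1} = a_{i+1,i} = −1 for 2 ≤ i ≤ n−2, all other entries 0, d_1 = 1/2 (with q^{1/2} read as p) and d_i = 1 for i ≥ 2. Fix c ∈ K nonzero and set F_i := f_i, E_i := e_i, T_i := t_i for 1 ≤ i ≤ n−1, E_n := 0 and T_n := c·t_1^{−1} t_2^{−1} ⋯ t_{n−1}^{−1}. Then these elements satisfy every defining relation of U_q(B_n) involving only F_1,…,F_{n−1}, E_1,…,E_n, T_1^{±1},…,T_n^{±1} (where B_n extends B_{n−1}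 by a_{n,n−1} = a_{n−1,n} = −1, a_{nj} = a_{jn} = 0 for j ≤ n−2, a_{nn} = 2, d_n = 1); in particular T_n is invertible, commutes with every T_i, and T_n E_j = q^{a_{nj}} E_j T_n, T_n F_j = q^{−a_{nj}} F_j T_n for 1 ≤ j ≤ n−1. -/
/-!
Every new relation mentioning `E_n` holds because `E_n = 0`; in a Serre relation with `i = n`
each term contains a positive power of `E_n` since `a_{nj} ≤ 0`. The new relations mentioning
`T_n` follow because `t_k X = q^{d_k a_{kj}} X t_k` for `X = e_j, f_j`, so `T_n` rescales `X` by
`q^{-∑_{k<n} d_k a_{kj}}`, and `∑_{k≤n} d_k a_{kj} = d_j ∑_{k≤n} a_{jk} = 0` for `j < n`: the rows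
of the Cartan matrix of `B_n` other than the last sum to zero.
-/

open scoped BigOperators

noncomputable section

variable {K : Type*} [Field K] {A : Type*} [Ring A] [Algebra K A]

/-- The Cartan matrix of type `B_n` (`a_{12} = -2`, `a_{21} = -1`, chain otherwise);
its upper-left `(n-1) × (n-1)` block is the Cartan matrix of `B_{n-1}`. -/
def cartanB (i j : ℕ) : ℤ :=
  if i = j then 2 else if i = 1 ∧ j = 2 then -2
  else if i + 1 = j ∨ j + 1 = i then -1 else 0

/-- Symmetrizers of `B_n`: `d_1 = 1/2`, `d_i = 1` otherwise, encoded through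
`q^{d_i} = p^{dB i}` for `q = p²`. -/
def dB : ℕ → ℤ := fun i => if i = 1 then 1 else 2

def QCommute (s : K) (x y : A) : Prop := x * y = algebraMap K A s * (y * x)

namespace QCommute

variable {s s' : K} {x x' y : A}

theorem one_iff : QCommute (1 : K) x y ↔ Commute x y := by
  simp [QCommute, Commute, SemiconjBy]

theorem mul_left (h : QCommute s x y) (h' : QCommute s' x' y) :
    QCommute (s * s') (x * x') y := by
  unfold QCommute at *
  calc x * x' * y = x * (x' * y) := mul_assoc _ _ _
    _ = algebraMap K A s' * (x * y * x') := by rw [h', Algebra.left_comm, mul_assoc]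
    _ = algebraMap K A (s * s') * (y * (x * x')) := by
      rw [h, ← mul_assoc, Algebra.left_comm, ← mul_assoc, ← map_mul, mul_assoc,
        mul_assoc]

theorem algebraMap_left (c : K) (y : A) : QCommute (1 : K) (algebraMap K A c) y :=
  one_iff.mpr (Algebra.commutes c y)

theorem units_inv_left {u : Aˣ} (h : QCommute s (u : A) y) : QCommute s⁻¹ (↑u⁻¹ : A) y := by
  have h_right : y * ↑u⁻¹ = algebraMap K A s * (↑u⁻¹ * y) := by
    calc y * ↑u⁻¹ = ↑u⁻¹ * (u * y) * ↑u⁻¹ := by rw [← mul_assoc, Units.inv_mul, one_mul]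
      _ = algebraMap K A s * (↑u⁻¹ * y) := by
        rw [h, Algebra.left_comm, mul_assoc, mul_assoc, mul_assoc, Units.mul_inv, mul_one]
  rcases eq_or_ne s 0 with rfl | hs
  · have hy : y = 0 := by simpa using congrArg (· * (u : A)) h_right
    simp [QCommute, hy]
  · rw [QCommute, h_right, ← mul_assoc, ← map_mul, inv_mul_cancel₀ hs, map_one, one_mul]

variable {p : K}

theorem list_prod_range_left (hp : p ≠ 0) {m : ℕ} {x : ℕ → Aˣ} {g : ℕ → ℤ}
    (h : ∀ k < m, QCommute (p ^ g k) (x k : A) y) :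
    QCommute (p ^ ∑ k ∈ Finset.range m, g k) (↑((List.range m).map x).prod : A) y := by
  induction m with
  | zero => simpa using algebraMap_left (1 : K) y
  | succ m ih =>
    rw [Finset.sum_range_succ, zpow_add₀ hp, List.range_succ, List.map_append, List.prod_append]
    simpa using (ih fun k hk => h k (by omega)).mul_left (h m (by omega))

theorem algebraMap_mul_prod_inv_left (hp : p ≠ 0) (c : Kˣ) {m : ℕ} {t : ℕ → Aˣ} {g : ℕ → ℤ}
    (h : ∀ k < m, QCommute (p ^ g k) (t k : A) y) :
    QCommute (p ^ (-∑ k ∈ Finset.range m, g k))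
      (↑(Units.map (algebraMap K A).toMonoidHom c *
        ((List.range m).map fun k => (t k)⁻¹).prod) : A) y := by
  have h_inv : ∀ k < m, QCommute (p ^ (-g k)) (↑(t k)⁻¹ : A) y := fun k hk => by
    simpa [zpow_neg] using (h k hk).units_inv_left
  simpa [Finset.sum_neg_distrib] using
    (algebraMap_left (c : K) y).mul_left (list_prod_range_left hp h_inv)

end QCommute

theorem cartanB_nonpos_of_ne {i j : ℕ} (h : i ≠ j) : cartanB i j ≤ 0 := by
  unfold cartanB; split_ifs <;> omega

theorem sum_range_dB_mul_cartanB {j : ℕ} (hj : 1 ≤ j) (m : ℕ) :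
    ∑ k ∈ Finset.range m, dB (k + 1) * cartanB (k + 1) j =
      if 0 < m ∧ m + 1 = j then -2 else if m = j then 2 else 0 := by
  induction m with
  | zero => simp only [Finset.sum_range_zero]; split_ifs <;> omega
  | succ m ih =>
    rw [Finset.sum_range_succ, ih]
    unfold cartanB dB
    split_ifs <;> omega

theorem sum_range_pred_dB_mul_cartanB {n j : ℕ} (hj : 1 ≤ j) (hjn : j < n) :
    ∑ k ∈ Finset.range (n - 1), dB (k + 1) * cartanB (k + 1) j = -(dB n * cartanB n j) := by
  rw [sum_range_dB_mul_cartanB hj]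
  unfold cartanB dB
  split_ifs <;> omega

theorem sum_range_mul_zero_pow_mul_mul_zero_pow {m : ℕ} (hm : m ≠ 0) (c : ℕ → A) (y : A) :
    ∑ v ∈ Finset.range (m + 1), c v * ((0 : A) ^ (m - v) * y * 0 ^ v) = 0 :=
  Finset.sum_eq_zero fun v _ => by rcases v with _ | v <;> simp [hm]

theorem UqRels.extend_with_e_zero {p : K} {n : ℕ} {a : ℕ → ℕ → ℤ} {D : ℕ → ℤ}
    {e f : ℕ → A} {t : ℕ → Aˣ} (hrel : UqRels p (n - 1) a D e f t fun _ => True) {u : Aˣ}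
    (ha : ∀ j, 1 ≤ j → j < n → a n j ≤ 0)
    (hut : ∀ j, 1 ≤ j → j < n → Commute (u : A) (t j))
    (hue : ∀ j, 1 ≤ j → j < n → QCommute (p ^ (D n * a n j)) (u : A) (e j))
    (huf : ∀ j, 1 ≤ j → j < n → QCommute (p ^ (-(D n * a n j))) (u : A) (f j)) :
    UqRels p n a D (fun i => if i = n then 0 else e i) f (fun i => if i = n then u else t i)
      fun j => j ≠ n := by
  obtain ⟨htt, hte, htf, hef, hef', hse, hsf⟩ := hrel
  refine ⟨fun i j hi hin hj hjn => ?_, fun i j hi hin hj hjn => ?_,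
    fun i j hi hin hj hjn (hjS : j ≠ n) => ?_, fun i hi hin (hiS : i ≠ n) => ?_,
    fun i j hi hin hj hjn (hjS : j ≠ n) hij => ?_, fun i j hi hin hj hjn hij => ?_,
    fun i j hi hin hj hjn (hiS : i ≠ n) (hjS : j ≠ n) hij => ?_⟩
  · by_cases hi' : i = n <;> by_cases hj' : j = n <;> simp only [hi', hj', ↓reduceIte]
    · exact (hut j hj (by omega)).eq
    · exact (hut i hi (by omega)).eq.symm
    · exact htt i j hi (by omega) hj (by omega)
  · by_cases hi' : i = n <;> by_cases hj' : j = n <;>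
      simp only [hi', hj', ↓reduceIte, mul_zero, zero_mul]
    · exact hue j hj (by omega)
    · exact hte i j hi (by omega) hj (by omega)
  · by_cases hi' : i = n <;> simp only [hi', ↓reduceIte]
    · exact huf j hj (by omega)
    · exact htf i j hi (by omega) hj (by omega) trivial
  · simp only [hiS, ↓reduceIte]
    exact hef i hi (by omega) trivial
  · by_cases hi' : i = n <;> simp only [hi', ↓reduceIte, mul_zero, zero_mul]
    exact hef' i j hi (by omega) hj (by omega) trivial hij
  · by_cases hi' : i = n <;> by_cases hj' : j = n <;>
      simp only [hi', hj', ↓reduceIte, mul_zero, zero_mul, Finset.sum_const_zero]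
    · subst hi'
      exact sum_range_mul_zero_pow_mul_mul_zero_pow (by have := ha j hj (by omega); omega) _ _
    · exact hse i j hi (by omega) hj (by omega) hij
  · exact hsf i j hi (by omega) hj (by omega) trivial trivial hij

theorem barUqBn_from_UqBnm1_general
    (n : ℕ) (p : K) (hp : p ≠ 0)
    (e f : ℕ → A) (t : ℕ → Aˣ)
    (hrel : UqRels p (n - 1) cartanB dB e f t (fun _ => True))
    (c : K) (hc : c ≠ 0) :
    UqRels p n cartanB dB
      (fun i => if i = n then 0 else e i) f
      (fun i => if i = n then
          Units.map (algebraMap K A).toMonoidHom (Units.mk0 c hc) *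
            ((List.range (n - 1)).map fun k => (t (k + 1))⁻¹).prod
        else t i)
      (fun j => j ≠ n) := by
  have ⟨htt, hte, htf, _⟩ := hrel
  have hT {y : A} {g : ℕ → ℤ} (h : ∀ k < n - 1, QCommute (p ^ g (k + 1)) (t (k + 1) : A) y) :=
    QCommute.algebraMap_mul_prod_inv_left hp (Units.mk0 c hc) (t := fun k => t (k + 1)) h
  refine hrel.extend_with_e_zero (fun j _ hjn => cartanB_nonpos_of_ne (by omega))
    (fun j hj hjn => ?_) (fun j hj hjn => ?_) (fun j hj hjn => ?_)
  · have hTt := hT (y := t j) (g := 0) fun k hk => by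
      simpa using QCommute.one_iff.mpr (htt (k + 1) j (by omega) (by omega) hj (by omega))
    simpa [QCommute.one_iff] using hTt
  · simpa [sum_range_pred_dB_mul_cartanB hj hjn] using hT (g := fun k => dB k * cartanB k j)
      fun k hk => hte (k + 1) j (by omega) (by omega) hj (by omega)
  · simpa [sum_range_pred_dB_mul_cartanB hj hjn] using hT (g := fun k => -(dB k * cartanB k j))
      fun k hk => htf (k + 1) j (by omega) (by omega) hj (by omega) trivial

/-- Lemma 1, `B` case: given a representation of `U_q(B_{n-1})` (`q = p²`), the
elements `F_i := f_i`, `E_i := e_i`, `T_i := t_i` (`i ≤ n-1`), `E_n := 0` and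
`T_n := c·t_1⁻¹⋯t_{n-1}⁻¹` satisfy all defining relations of `U_q(B_n)` not
involving `f_n`. -/
theorem barUqBn_from_UqBnm1
    (n : ℕ) (hn : 3 ≤ n) (p : K) (hp : p ≠ 0) (hq2 : (p ^ 2) ^ 2 ≠ 1)
    (e f : ℕ → A) (t : ℕ → Aˣ)
    (hrel : UqRels p (n - 1) cartanB dB e f t (fun _ => True))
    (c : K) (hc : c ≠ 0) :
    UqRels p n cartanB dB
      (fun i => if i = n then 0 else e i) f
      (fun i => if i = n then
          Units.map (algebraMap K A).toMonoidHom (Units.mk0 c hc) *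
            ((List.range (n - 1)).map fun k => (t (k + 1))⁻¹).prod
        else t i)
      (fun j => j ≠ n) :=
  barUqBn_from_UqBnm1_general n p hp e f t hrel c hc
end
end

section
/- Let n ≥ 3, K a field, q ∈ K invertible with q⁴ ≠ 1. Let A be a unital associative K-algebra containing elements e_i, f_i and invertible t_i (1 ≤ i ≤ n−1) satisfying the defining relations of U_q(C_{n−1}), where C_{n−1} has Cartan data a_{ii} = 2, a_{12} = −1, a_{21} = −2, a_{i,i+1} = a_{i+1,i} = −1 for 2 ≤ i ≤ n−2, all other entries 0, d_1 = 2 and d_i = 1 for i ≥ 2. Suppose A also contains an invertible element u commuting with every t_j and satisfying u² = t_1^{−1}, u e_j = q^{−a_{1j}} e_j u and u f_j = q^{a_{1j}} f_j u for 1 ≤ j ≤ n−1. Fix c ∈ K nonzero and set F_i := f_i, E_i := e_i, T_i := t_i for 1 ≤ i ≤ n−1, E_n := 0 and T_n := c·u·t_2^{−1} t_3^{−1} ⋯ t_{n−1}^{−1}. Then these elements satisfy every defining relation of U_q(C_n) involving only F_1,…,F_{n−1}, E_1,…,E_n, T_1^{±1},…,T_n^{±1} (where C_n extends C_{n−1}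 by a_{n,n−1} = a_{n−1,n} = −1, a_{nj} = a_{jn} = 0 for j ≤ n−2, a_{nn} = 2, d_n = 1); in particular T_n is invertible, commutes with every T_i, and T_n E_j = q^{a_{nj}} E_j T_n, T_n F_j = q^{−a_{nj}} F_j T_n for 1 ≤ j ≤ n−1. -/
open scoped BigOperators

noncomputable section

variable {K : Type*} [Field K] {A : Type*} [Ring A] [Algebra K A]

/-- The Cartan matrix of type `C_n` (`a_{12} = -1`, `a_{21} = -2`, chain otherwise);
its upper-left `(n-1) × (n-1)` block is the Cartan matrix of `C_{n-1}`. -/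
def cartanC (i j : ℕ) : ℤ :=
  if i = j then 2 else if i = 2 ∧ j = 1 then -2
  else if i + 1 = j ∨ j + 1 = i then -1 else 0

/-- Symmetrizers of `C_n`: `d_1 = 2`, `d_i = 1` otherwise. -/
def dC : ℕ → ℤ := fun i => if i = 1 then 2 else 1

/-! ### Auxiliary lemmas -/

lemma alg_shift (r : K) (a b : A) :
    a * (algebraMap K A r * b) = algebraMap K A r * (a * b) := by
  rw [← mul_assoc, ← Algebra.commutes, mul_assoc]

lemma qcomm_mul (s1 s2 : K) (w1 w2 x : A)
    (h1 : w1 * x = algebraMap K A s1 * (x * w1))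
    (h2 : w2 * x = algebraMap K A s2 * (x * w2)) :
    (w1 * w2) * x = algebraMap K A (s1 * s2) * (x * (w1 * w2)) := by
  calc w1 * w2 * x = w1 * (w2 * x) := by rw [mul_assoc]
    _ = algebraMap K A s2 * ((w1 * x) * w2) := by rw [h2, alg_shift, mul_assoc]
    _ = algebraMap K A s2 * (algebraMap K A s1 * ((x * w1) * w2)) := by
        rw [h1, mul_assoc]
    _ = algebraMap K A (s1 * s2) * (x * (w1 * w2)) := by
        rw [← mul_assoc, ← map_mul, mul_comm s2 s1, mul_assoc x]

lemma qcomm_scalar (r s : K) (w x : A)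
    (h : w * x = algebraMap K A s * (x * w)) :
    (algebraMap K A r * w) * x = algebraMap K A s * (x * (algebraMap K A r * w)) := by
  rw [mul_assoc, h, alg_shift, ← mul_assoc x, ← Algebra.commutes r x, mul_assoc]

lemma qcomm_inv (s : K) (hs : s ≠ 0) (w : Aˣ) (x : A)
    (h : (w : A) * x = algebraMap K A s * (x * w)) :
    ((w⁻¹ : Aˣ) : A) * x = algebraMap K A s⁻¹ * (x * ((w⁻¹ : Aˣ) : A)) := by
  have hx : x * (w : A) = algebraMap K A s⁻¹ * ((w : A) * x) := by
    rw [h, ← mul_assoc, ← map_mul, inv_mul_cancel₀ hs, map_one, one_mul]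
  calc ((w⁻¹ : Aˣ) : A) * x
      = ((w⁻¹ : Aˣ) : A) * ((x * (w : A)) * ((w⁻¹ : Aˣ) : A)) := by
        rw [mul_assoc x, Units.mul_inv, mul_one]
    _ = algebraMap K A s⁻¹ * (x * ((w⁻¹ : Aˣ) : A)) := by
        rw [hx, mul_assoc, alg_shift, ← mul_assoc ((w⁻¹ : Aˣ) : A),
          ← mul_assoc ((w⁻¹ : Aˣ) : A), Units.inv_mul, one_mul]

lemma qcomm_prod_range (q : K) (hq : q ≠ 0) (x : A) (g : ℕ → Aˣ) (m : ℕ → ℤ) :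
    ∀ N, (∀ k < N, ((g k : A)) * x = algebraMap K A (q ^ m k) * (x * g k)) →
    ((((List.range N).map g).prod : Aˣ) : A) * x
      = algebraMap K A (q ^ (∑ k ∈ Finset.range N, m k)) *
        (x * (((List.range N).map g).prod : Aˣ)) := by
  intro N
  induction N with
  | zero => intro _; simp
  | succ N ih =>
    intro hk
    rw [List.range_succ, List.map_append, List.prod_append]
    simp only [List.map_cons, List.map_nil, List.prod_cons, List.prod_nil, mul_one,
      Units.val_mul]
    rw [Finset.sum_range_succ, zpow_add₀ hq]
    exact qcomm_mul _ _ _ _ _ (ih (fun k hkN => hk k (by omega))) (hk N (by omega))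

lemma cartanC_cases (i j : ℕ) :
    cartanC i j = if i = j then 2 else if i = 2 ∧ j = 1 then -2
      else if i + 1 = j ∨ j + 1 = i then -1 else 0 := rfl

lemma cartanC_far (i j : ℕ) (h1 : i ≠ j) (h2 : i + 1 ≠ j) (h3 : j + 1 ≠ i)
    (h4 : ¬(i = 2 ∧ j = 1)) : cartanC i j = 0 := by
  rw [cartanC_cases]; split_ifs <;> first | rfl | omega

lemma cartanC_self (i : ℕ) : cartanC i i = 2 := by
  rw [cartanC_cases]; split_ifs <;> first | rfl | omega

lemma cartanC_adj (i j : ℕ) (h : i + 1 = j ∨ j + 1 = i) (h4 : ¬(i = 2 ∧ j = 1))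
    (h1 : i ≠ j) : cartanC i j = -1 := by
  rw [cartanC_cases]; split_ifs <;> first | rfl | omega

lemma cartanC_nonpos (i j : ℕ) (h : i ≠ j) : cartanC i j ≤ 0 := by
  rw [cartanC_cases]; split_ifs <;> omega

lemma sumC : ∀ n, 3 ≤ n → ∀ j, 1 ≤ j →
    (∑ k ∈ Finset.range (n - 2), cartanC (k + 2) j)
      = if j ≤ n - 1 then -cartanC 1 j - cartanC n j else if j = n then -1 else 0 := by
  intro n hn
  induction n, hn using Nat.le_induction with
  | base =>
    intro j hj
    show (∑ k ∈ Finset.range 1, cartanC (k + 2) j) = _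
    rw [Finset.sum_range_one]
    rcases (by omega : j = 1 ∨ j = 2 ∨ j = 3 ∨ 4 ≤ j) with h | h | h | h
    · subst h; norm_num [cartanC_cases]
    · subst h; norm_num [cartanC_cases]
    · subst h; norm_num [cartanC_cases]
    · rw [if_neg (by omega), if_neg (by omega),
        cartanC_far 2 j (by omega) (by omega) (by omega) (by omega)]
  | succ n hn ih =>
    intro j hj
    have h1 : n + 1 - 2 = (n - 2) + 1 := by omega
    rw [h1, Finset.sum_range_succ]
    have h2 : n - 2 + 2 = n := by omega
    rw [h2, ih j hj]
    rcases (by omega : (1 ≤ j ∧ j ≤ n - 1) ∨ j = n ∨ j = n + 1 ∨ n + 2 ≤ j) with h | h | h | h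
    · rw [if_pos h.2, if_pos (by omega),
        cartanC_far (n + 1) j (by omega) (by omega) (by omega) (by omega)]
      ring
    · subst h
      rw [if_neg (by omega), if_pos rfl, if_pos (by omega), cartanC_self,
        cartanC_far 1 j (by omega) (by omega) (by omega) (by omega),
        cartanC_adj (j + 1) j (by omega) (by omega) (by omega)]
      ring
    · subst h
      rw [if_neg (by omega), if_neg (by omega), if_neg (by omega), if_pos rfl,
        cartanC_adj n (n + 1) (by omega) (by omega) (by omega)]
      ring
    · rw [if_neg (by omega), if_neg (by omega), if_neg (by omega), if_neg (by omega),
        cartanC_far n j (by omega) (by omega) (by omega) (by omega)]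
      ring


/-- Lemma 1, `C` case: given a representation of `U_q(C_{n-1})` together with an
invertible `u` with `u² = t_1⁻¹`, `u e_j = q^{-a_{1j}} e_j u`,
`u f_j = q^{a_{1j}} f_j u`, the elements `F_i := f_i`, `E_i := e_i`, `T_i := t_i`
(`i ≤ n-1`), `E_n := 0` and `T_n := c·u·t_2⁻¹⋯t_{n-1}⁻¹` satisfy all defining
relations of `U_q(C_n)` not involving `f_n`. -/
theorem barUqCn_from_UqCnm1
    (n : ℕ) (hn : 3 ≤ n) (q : K) (hq : q ≠ 0) (hq4 : q ^ 4 ≠ 1)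
    (e f : ℕ → A) (t : ℕ → Aˣ)
    (hrel : UqRels q (n - 1) cartanC dC e f t (fun _ => True))
    (u : Aˣ)
    (hut : ∀ j, 1 ≤ j → j ≤ n - 1 → (u : A) * (t j : A) = (t j : A) * (u : A))
    (hu2 : u ^ 2 = (t 1)⁻¹)
    (hue : ∀ j, 1 ≤ j → j ≤ n - 1 →
      (u : A) * e j = algebraMap K A (q ^ (-(cartanC 1 j))) * (e j * (u : A)))
    (huf : ∀ j, 1 ≤ j → j ≤ n - 1 →
      (u : A) * f j = algebraMap K A (q ^ (cartanC 1 j)) * (f j * (u : A)))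
    (c : K) (hc : c ≠ 0) :
    UqRels q n cartanC dC
      (fun i => if i = n then 0 else e i) f
      (fun i => if i = n then
          Units.map (algebraMap K A).toMonoidHom (Units.mk0 c hc) * u *
            ((List.range (n - 2)).map fun k => (t (k + 2))⁻¹).prod
        else t i)
      (fun j => j ≠ n) := by
  
  obtain ⟨h1, h2, h3, h4, h5, h6, h7⟩ := hrel
  set Cu : Aˣ := Units.map (algebraMap K A).toMonoidHom (Units.mk0 c hc) with hCu
  set P : Aˣ := ((List.range (n - 2)).map fun k => (t (k + 2))⁻¹).prod with hP
  have hCucoe : (Cu : A) = algebraMap K A c := by simp [hCu]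
  have hTco : ((Cu * u * P : Aˣ) : A) = algebraMap K A c * ((u : A) * (P : A)) := by
    rw [Units.val_mul, Units.val_mul, hCucoe, mul_assoc]
  have hdCn : dC n = 1 := by rw [dC]; rw [if_neg (by omega)]
  have hdC2 : ∀ k, dC (k + 2) = 1 := by intro k; rw [dC]; rw [if_neg (by omega)]
  -- commutation of Cu * u * P with e j
  have hPe : ∀ j, 1 ≤ j → j ≤ n - 1 →
      (P : A) * e j
        = algebraMap K A (q ^ (∑ k ∈ Finset.range (n - 2), -(cartanC (k + 2) j))) *
          (e j * P) := by
    intro j hj1 hj2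
    refine qcomm_prod_range q hq (e j) _ _ (n - 2) ?_
    intro k hk
    have h := qcomm_inv (q ^ (dC (k + 2) * cartanC (k + 2) j)) (zpow_ne_zero _ hq)
      (t (k + 2)) (e j) (h2 (k + 2) j (by omega) (by omega) hj1 hj2)
    rw [← zpow_neg, hdC2 k, one_mul] at h
    exact h
  have hPf : ∀ j, 1 ≤ j → j ≤ n - 1 →
      (P : A) * f j
        = algebraMap K A (q ^ (∑ k ∈ Finset.range (n - 2), cartanC (k + 2) j)) *
          (f j * P) := by
    intro j hj1 hj2
    refine qcomm_prod_range q hq (f j) _ _ (n - 2) ?_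
    intro k hk
    have h := qcomm_inv (q ^ (-(dC (k + 2) * cartanC (k + 2) j))) (zpow_ne_zero _ hq)
      (t (k + 2)) (f j) (h3 (k + 2) j (by omega) (by omega) hj1 hj2 trivial)
    rw [← zpow_neg, neg_neg, hdC2 k, one_mul] at h
    exact h
  have hTe : ∀ j, 1 ≤ j → j ≤ n - 1 →
      ((Cu * u * P : Aˣ) : A) * e j
        = algebraMap K A (q ^ (dC n * cartanC n j)) * (e j * ((Cu * u * P : Aˣ) : A)) := by
    intro j hj1 hj2
    have huP := qcomm_mul _ _ ((u : A)) ((P : A)) (e j)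
      (hue j hj1 hj2) (hPe j hj1 hj2)
    have hfull := qcomm_scalar c _ _ _ huP
    rw [hTco]
    have hexp : q ^ (-cartanC 1 j) * q ^ (∑ k ∈ Finset.range (n - 2), -(cartanC (k + 2) j))
        = q ^ (dC n * cartanC n j) := by
      rw [← zpow_add₀ hq, Finset.sum_neg_distrib, sumC n hn j hj1, if_pos hj2, hdCn]
      ring_nf
    rw [hexp] at hfull
    exact hfull
  have hTf : ∀ j, 1 ≤ j → j ≤ n - 1 →
      ((Cu * u * P : Aˣ) : A) * f j
        = algebraMap K A (q ^ (-(dC n * cartanC n j))) *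
          (f j * ((Cu * u * P : Aˣ) : A)) := by
    intro j hj1 hj2
    have huP := qcomm_mul _ _ ((u : A)) ((P : A)) (f j)
      (huf j hj1 hj2) (hPf j hj1 hj2)
    have hfull := qcomm_scalar c _ _ _ huP
    rw [hTco]
    have hexp : q ^ (cartanC 1 j) * q ^ (∑ k ∈ Finset.range (n - 2), cartanC (k + 2) j)
        = q ^ (-(dC n * cartanC n j)) := by
      rw [← zpow_add₀ hq, sumC n hn j hj1, if_pos hj2, hdCn]
      ring_nf
    rw [hexp] at hfull
    exact hfull
  have hcomm : ∀ j, 1 ≤ j → j ≤ n - 1 →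
      Commute ((Cu * u * P : Aˣ) : A) ((t j : A)) := by
    intro j hj1 hj2
    have c1 : Commute ((Cu : Aˣ) : A) ((t j : A)) := by
      rw [hCucoe]; exact Algebra.commutes c _
    have c2 : Commute ((u : Aˣ) : A) ((t j : A)) := hut j hj1 hj2
    have c3 : Commute ((P : Aˣ) : A) ((t j : A)) := by
      have hcoe : ((P : Aˣ) : A)
          = (((List.range (n - 2)).map fun k => (((t (k + 2))⁻¹ : Aˣ) : A))).prod := by
        rw [hP]
        exact (map_list_prod (Units.coeHom A) _).trans (by rw [List.map_map]; rfl)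
      rw [hcoe]
      refine Commute.list_prod_left _ _ ?_
      intro x hx
      rw [List.mem_map] at hx
      obtain ⟨k, hk, rfl⟩ := hx
      rw [List.mem_range] at hk
      have hcs : Commute ((t (k + 2) : Aˣ) : A) ((t j : Aˣ) : A) :=
        h1 (k + 2) j (by omega) (by omega) hj1 hj2
      exact hcs.units_inv_left
    rw [Units.val_mul, Units.val_mul]
    exact (c1.mul_left c2).mul_left c3
  refine ⟨?_, ?_, ?_, ?_, ?_, ?_, ?_⟩
  · -- t-t commutation
    intro i j hi1 hin hj1 hjn
    simp only []
    by_cases hi : i = n <;> by_cases hj : j = n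
    · rw [if_pos hi, if_pos hj]
    · rw [if_pos hi, if_neg hj]
      exact hcomm j hj1 (by omega)
    · rw [if_neg hi, if_pos hj]
      exact (hcomm i hi1 (by omega)).symm
    · rw [if_neg hi, if_neg hj]
      exact h1 i j hi1 (by omega) hj1 (by omega)
  · -- t-e relations
    intro i j hi1 hin hj1 hjn
    simp only []
    by_cases hj : j = n
    · rw [if_pos hj]
      simp
    · rw [if_neg hj]
      by_cases hi : i = n
      · rw [if_pos hi, hi]
        exact hTe j hj1 (by omega)
      · rw [if_neg hi]
        exact h2 i j hi1 (by omega) hj1 (by omega)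
  · -- t-f relations
    intro i j hi1 hin hj1 hjn hSj
    simp only []
    by_cases hi : i = n
    · rw [if_pos hi, hi]
      exact hTf j hj1 (by omega)
    · rw [if_neg hi]
      exact h3 i j hi1 (by omega) hj1 (by omega) trivial
  · -- e-f diagonal
    intro i hi1 hin hSi
    simp only [if_neg hSi]
    exact h4 i hi1 (by omega) trivial
  · -- e-f off-diagonal
    intro i j hi1 hin hj1 hjn hSj hij
    simp only []
    by_cases hi : i = n
    · rw [if_pos hi]
      rw [zero_mul, mul_zero]
    · rw [if_neg hi]
      exact h5 i j hi1 (by omega) hj1 (by omega) trivial hij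
  · -- e Serre relations
    intro i j hi1 hin hj1 hjn hij
    simp only []
    by_cases hi : i = n
    · subst hi
      rw [if_pos rfl]
      have hm : 1 ≤ (1 - cartanC i j).toNat := by
        have := cartanC_nonpos i j hij
        omega
      refine Finset.sum_eq_zero ?_
      intro v hv
      rcases Nat.eq_zero_or_pos v with h | h
      · subst h
        rw [zero_pow (by omega : (1 - cartanC i j).toNat - 0 ≠ 0), zero_mul, zero_mul,
          mul_zero]
      · rw [zero_pow (by omega : v ≠ 0), mul_zero, mul_zero]
    · by_cases hj : j = n
      · rw [if_pos hj, if_neg hi]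
        refine Finset.sum_eq_zero ?_
        intro v hv
        rw [mul_zero, zero_mul, mul_zero]
      · rw [if_neg hi, if_neg hj]
        exact h6 i j hi1 (by omega) hj1 (by omega) hij
  · -- f Serre relations
    intro i j hi1 hin hj1 hjn hSi hSj hij
    exact h7 i j hi1 (by omega) hj1 (by omega) trivial trivial hij
end
end

section
/- Let n ≥ 4, K a field, p ∈ K invertible with q := p² and q² ≠ 1. Let A be a unital associative K-algebra containing elements e_i, f_i and invertible t_i (1 ≤ i ≤ n−1) satisfying the defining relations of U_q(D_{n−1}), where D_{n−1} has Cartan data a_{ii} = 2, a_{13} = a_{31} = a_{23} = a_{32} = −1, a_{12} = a_{21} = 0, a_{i,i+1} = a_{i+1,i} = −1 for 3 ≤ i ≤ n−2, all other entries 0, and all d_i = 1. Suppose A also contains invertible elements u_1, u_2 commuting with each other and with every t_j, satisfying u_a² = t_a^{−1}, u_a e_j = p^{−a_{aj}} e_j u_a and u_a f_j = p^{a_{aj}} f_j u_a for a ∈ {1,2} and 1 ≤ j ≤ n−1. Fix c ∈ K nonzero and set F_i := f_i, E_i := e_i, T_i := t_i for 1 ≤ i ≤ n−1, E_n := 0 and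 T_n := c·u_1 u_2 t_3^{−1} t_4^{−1} ⋯ t_{n−1}^{−1}. Then these elements satisfy every defining relation of U_q(D_n) involving only F_1,…,F_{n−1}, E_1,…,E_n, T_1^{±1},…,T_n^{±1} (where D_n extends D_{n−1} by a_{n,n−1} = a_{n−1,n} = −1, a_{nj} = a_{jn} = 0 for j ≤ n−2, a_{nn} = 2, d_n = 1); in particular T_n is invertible, commutes with every T_i, and T_n E_j = q^{a_{nj}} E_j T_n, T_n F_j = q^{−a_{nj}} F_j T_n for 1 ≤ j ≤ n−1. -/
open scoped BigOperators

noncomputable section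

variable {K : Type*} [Field K] {A : Type*} [Ring A] [Algebra K A]

/-- The Cartan matrix of type `D_n` (nodes `1` and `2` both attached to node `3`,
chain `3 — 4 — ⋯ — n`); its upper-left `(n-1) × (n-1)` block is the Cartan matrix
of `D_{n-1}`. -/
def cartanD (i j : ℕ) : ℤ :=
  if i = j then 2
  else if (i = 1 ∧ j = 3) ∨ (i = 3 ∧ j = 1) ∨ (i = 2 ∧ j = 3) ∨ (i = 3 ∧ j = 2) then -1
  else if (i + 1 = j ∨ j + 1 = i) ∧ 3 ≤ i ∧ 3 ≤ j then -1 else 0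

def cfD (m j : ℕ) : ℤ :=
  if m = 0 then 0
  else if j ≤ 2 then -1
  else if j = 3 then (if m = 1 then 2 else 1)
  else if j ≤ m + 1 then 0
  else if j = m + 2 then 1
  else if j = m + 3 then -1
  else 0

lemma sum_cartanD (j : ℕ) (hj : 1 ≤ j) : ∀ m : ℕ,
    ∑ k ∈ Finset.range m, cartanD (k + 3) j = cfD m j := by
  intro m
  induction m with
  | zero => simp [cfD]
  | succ m ih =>
    rw [Finset.sum_range_succ, ih]
    unfold cartanD cfD
    split_ifs <;> first | exact (‹False›).elim | omega

lemma cartanD_one (j : ℕ) : cartanD 1 j = if j = 1 then 2 else if j = 3 then -1 else 0 := by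
  unfold cartanD; split_ifs <;> omega

lemma cartanD_two (j : ℕ) : cartanD 2 j = if j = 2 then 2 else if j = 3 then -1 else 0 := by
  unfold cartanD; split_ifs <;> omega

lemma cartanD_top (n j : ℕ) (hn : 4 ≤ n) :
    cartanD n j = if j = n then 2 else if j + 1 = n ∨ n + 1 = j then -1 else 0 := by
  unfold cartanD; split_ifs <;> omega

lemma cartanD_offdiag (i j : ℕ) (h : i ≠ j) : cartanD i j ≤ 0 := by
  unfold cartanD; split_ifs <;> omega

lemma key_sumD (n : ℕ) (hn : 4 ≤ n) (j : ℕ) (hj : 1 ≤ j) (hj2 : j ≤ n - 1) :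
    cartanD 1 j + cartanD 2 j + 2 * (∑ k ∈ Finset.range (n - 3), cartanD (k + 3) j)
      + 2 * cartanD n j = 0 := by
  rw [sum_cartanD j hj, cartanD_one, cartanD_two, cartanD_top n j hn]
  unfold cfD
  split_ifs <;> omega

lemma scommA (r : K) (x y : A) :
    x * (algebraMap K A r * y) = algebraMap K A r * (x * y) := by
  rw [← mul_assoc, ← Algebra.commutes, mul_assoc]

lemma conj_compA (x x' y : A) (r r' : K)
    (h : x * y = algebraMap K A r * (y * x))
    (h' : x' * y = algebraMap K A r' * (y * x')) :
    (x * x') * y = algebraMap K A (r * r') * (y * (x * x')) := by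
  calc (x * x') * y = x * (x' * y) := by rw [mul_assoc]
    _ = x * (algebraMap K A r' * (y * x')) := by rw [h']
    _ = algebraMap K A r' * (x * (y * x')) := by rw [scommA]
    _ = algebraMap K A r' * ((x * y) * x') := by rw [mul_assoc]
    _ = algebraMap K A r' * ((algebraMap K A r * (y * x)) * x') := by rw [h]
    _ = algebraMap K A r' * (algebraMap K A r * ((y * x) * x')) := by rw [mul_assoc]
    _ = algebraMap K A (r * r') * (y * (x * x')) := by
        rw [← mul_assoc, ← map_mul, mul_comm r' r, mul_assoc y]

lemma conjInvA (X : Aˣ) (y : A) (r : K) (hr : r ≠ 0)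
    (h : (X : A) * y = algebraMap K A r * (y * (X : A))) :
    ((X⁻¹ : Aˣ) : A) * y = algebraMap K A r⁻¹ * (y * ((X⁻¹ : Aˣ) : A)) := by
  have e1 : ((X⁻¹ : Aˣ) : A) * ((X : A) * y) * ((X⁻¹ : Aˣ) : A)
      = y * ((X⁻¹ : Aˣ) : A) := by
    rw [← mul_assoc ((X⁻¹ : Aˣ) : A), Units.inv_mul, one_mul]
  have e2 : ((X⁻¹ : Aˣ) : A) * (algebraMap K A r * (y * (X : A))) * ((X⁻¹ : Aˣ) : A)
      = algebraMap K A r * (((X⁻¹ : Aˣ) : A) * y) := by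
    rw [scommA, mul_assoc (algebraMap K A r), mul_assoc ((X⁻¹ : Aˣ) : A),
      mul_assoc y, Units.mul_inv, mul_one]
  have h1 : y * ((X⁻¹ : Aˣ) : A) = algebraMap K A r * (((X⁻¹ : Aˣ) : A) * y) := by
    rw [← e1, h, e2]
  rw [h1, ← mul_assoc, ← map_mul, inv_mul_cancel₀ hr, map_one, one_mul]

lemma prod_conjA (y : A) (t : ℕ → Aˣ) (w : K) (hw : w ≠ 0) (g : ℕ → ℤ) (m₀ : ℕ)
    (h : ∀ k, k < m₀ → (((t (k + 3))⁻¹ : Aˣ) : A) * y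
        = algebraMap K A (w ^ g k) * (y * (((t (k + 3))⁻¹ : Aˣ) : A))) :
    ∀ m, m ≤ m₀ →
      ((((List.range m).map fun k => (t (k + 3))⁻¹).prod : Aˣ) : A) * y
        = algebraMap K A (w ^ (∑ k ∈ Finset.range m, g k)) *
            (y * ((((List.range m).map fun k => (t (k + 3))⁻¹).prod : Aˣ) : A)) := by
  intro m
  induction m with
  | zero => intro _; simp
  | succ m ih =>
    intro hm
    have hcoe : ((((List.range (m + 1)).map fun k => (t (k + 3))⁻¹).prod : Aˣ) : A)
        = ((((List.range m).map fun k => (t (k + 3))⁻¹).prod : Aˣ) : A)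
          * (((t (m + 3))⁻¹ : Aˣ) : A) := by
      rw [List.range_succ]; simp
    rw [hcoe, Finset.sum_range_succ, zpow_add₀ hw]
    exact conj_compA _ _ _ _ _ (ih (by omega)) (h m (by omega))

lemma prod_commuteA (y : A) (t : ℕ → Aˣ) (m₀ : ℕ)
    (h : ∀ k, k < m₀ → Commute y ((t (k + 3) : Aˣ) : A)) :
    ∀ m, m ≤ m₀ →
      Commute y ((((List.range m).map fun k => (t (k + 3))⁻¹).prod : Aˣ) : A) := by
  intro m
  induction m with
  | zero => intro _; simp
  | succ m ih =>
    intro hm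
    have hcoe : ((((List.range (m + 1)).map fun k => (t (k + 3))⁻¹).prod : Aˣ) : A)
        = ((((List.range m).map fun k => (t (k + 3))⁻¹).prod : Aˣ) : A)
          * (((t (m + 3))⁻¹ : Aˣ) : A) := by
      rw [List.range_succ]; simp
    rw [hcoe]
    exact (ih (by omega)).mul_right ((h m (by omega)).units_inv_right)

/-- Lemma 1, `D` case: given a representation of `U_q(D_{n-1})` (`q = p²`) together
with commuting invertible `u_1, u_2` with `u_a² = t_a⁻¹`,
`u_a e_j = p^{-a_{aj}} e_j u_a`, `u_a f_j = p^{a_{aj}} f_j u_a`, the elements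
`F_i := f_i`, `E_i := e_i`, `T_i := t_i` (`i ≤ n-1`), `E_n := 0` and
`T_n := c·u_1 u_2 t_3⁻¹⋯t_{n-1}⁻¹` satisfy all defining relations of `U_q(D_n)` not
involving `f_n`. -/
theorem barUqDn_from_UqDnm1
    (n : ℕ) (hn : 4 ≤ n) (p : K) (hp : p ≠ 0) (hq2 : (p ^ 2) ^ 2 ≠ 1)
    (e f : ℕ → A) (t : ℕ → Aˣ)
    (hrel : UqRels (p ^ 2) (n - 1) cartanD (fun _ => 1) e f t (fun _ => True))
    (u1 u2 : Aˣ)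
    (hu12 : u1 * u2 = u2 * u1)
    (hu1t : ∀ j, 1 ≤ j → j ≤ n - 1 → (u1 : A) * (t j : A) = (t j : A) * (u1 : A))
    (hu2t : ∀ j, 1 ≤ j → j ≤ n - 1 → (u2 : A) * (t j : A) = (t j : A) * (u2 : A))
    (hu1sq : u1 ^ 2 = (t 1)⁻¹) (hu2sq : u2 ^ 2 = (t 2)⁻¹)
    (hu1e : ∀ j, 1 ≤ j → j ≤ n - 1 →
      (u1 : A) * e j = algebraMap K A (p ^ (-(cartanD 1 j))) * (e j * (u1 : A)))
    (hu1f : ∀ j, 1 ≤ j → j ≤ n - 1 →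
      (u1 : A) * f j = algebraMap K A (p ^ (cartanD 1 j)) * (f j * (u1 : A)))
    (hu2e : ∀ j, 1 ≤ j → j ≤ n - 1 →
      (u2 : A) * e j = algebraMap K A (p ^ (-(cartanD 2 j))) * (e j * (u2 : A)))
    (hu2f : ∀ j, 1 ≤ j → j ≤ n - 1 →
      (u2 : A) * f j = algebraMap K A (p ^ (cartanD 2 j)) * (f j * (u2 : A)))
    (c : K) (hc : c ≠ 0) :
    UqRels (p ^ 2) n cartanD (fun _ => 1)
      (fun i => if i = n then 0 else e i) f
      (fun i => if i = n then
          Units.map (algebraMap K A).toMonoidHom (Units.mk0 c hc) * u1 * u2 *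
            ((List.range (n - 3)).map fun k => (t (k + 3))⁻¹).prod
        else t i)
      (fun j => j ≠ n) := by
  obtain ⟨ht, hte, htf, hef, hco, hse, hsf⟩ := hrel
  have hp2 : (p ^ 2 : K) ≠ 0 := pow_ne_zero _ hp
  have hqz : ∀ z : ℤ, ((p ^ 2 : K)) ^ z = p ^ (2 * z) := by
    intro z; rw [← zpow_natCast p 2, ← zpow_mul]; norm_num
  set P : Aˣ := ((List.range (n - 3)).map fun k => (t (k + 3))⁻¹).prod with hPdef
  set Tn : Aˣ := Units.map (algebraMap K A).toMonoidHom (Units.mk0 c hc) * u1 * u2 * P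
    with hTdef
  have hTcoe : (Tn : A) = algebraMap K A c * ((u1 : A) * ((u2 : A) * (P : A))) := by
    rw [hTdef]; simp [Units.val_mul, mul_assoc]
  -- Tn commutes with every t l
  have htc : ∀ l, 1 ≤ l → l ≤ n - 1 → Commute ((Tn : A)) ((t l : A)) := by
    intro l h1 h2
    have hPl : Commute ((t l : A)) ((P : A)) := by
      have := prod_commuteA ((t l : A)) t (n - 3)
        (fun k hk => ht l (k + 3) h1 h2 (by omega) (by omega)) (n - 3) le_rfl
      rwa [← hPdef] at this
    have c0 : Commute (algebraMap K A c) ((t l : A)) := Algebra.commutes c _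
    have c1 : Commute ((u1 : A)) ((t l : A)) := hu1t l h1 h2
    have c2 : Commute ((u2 : A)) ((t l : A)) := hu2t l h1 h2
    rw [hTcoe]
    exact Commute.mul_left c0 (Commute.mul_left c1 (Commute.mul_left c2 hPl.symm))
  -- Tn conjugation on e j
  have hTne : ∀ j, 1 ≤ j → j ≤ n - 1 →
      (Tn : A) * e j = algebraMap K A ((p ^ 2 : K) ^ (cartanD n j)) * (e j * (Tn : A)) := by
    intro j hj1 hj2
    have hinv : ∀ k, k < n - 3 → (((t (k + 3))⁻¹ : Aˣ) : A) * e j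
        = algebraMap K A ((p ^ 2 : K) ^ (-(cartanD (k + 3) j))) *
            (e j * (((t (k + 3))⁻¹ : Aˣ) : A)) := by
      intro k hk
      have h0 := hte (k + 3) j (by omega) (by omega) hj1 hj2
      have h1 := conjInvA (t (k + 3)) (e j) _ (zpow_ne_zero _ hp2) h0
      rwa [← zpow_neg, one_mul] at h1
    have hP := prod_conjA (e j) t (p ^ 2) hp2 (fun k => -(cartanD (k + 3) j)) (n - 3)
      hinv (n - 3) le_rfl
    rw [← hPdef, Finset.sum_neg_distrib] at hP
    have h23 := conj_compA _ _ _ _ _ (hu2e j hj1 hj2) hP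
    have h123 := conj_compA _ _ _ _ _ (hu1e j hj1 hj2) h23
    have hscal : c * (p ^ (-(cartanD 1 j)) * (p ^ (-(cartanD 2 j)) *
        (p ^ 2 : K) ^ (-(∑ k ∈ Finset.range (n - 3), cartanD (k + 3) j))))
        = (p ^ 2 : K) ^ (cartanD n j) * c := by
      rw [mul_comm]
      congr 1
      rw [hqz, hqz, ← zpow_add₀ hp, ← zpow_add₀ hp]
      congr 1
      have hks := key_sumD n hn j hj1 hj2
      omega
    rw [hTcoe, scommA, mul_assoc, h123, ← mul_assoc, ← map_mul, hscal, map_mul, mul_assoc]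
  -- Tn conjugation on f j
  have hTnf : ∀ j, 1 ≤ j → j ≤ n - 1 →
      (Tn : A) * f j = algebraMap K A ((p ^ 2 : K) ^ (-(cartanD n j))) * (f j * (Tn : A)) := by
    intro j hj1 hj2
    have hinv : ∀ k, k < n - 3 → (((t (k + 3))⁻¹ : Aˣ) : A) * f j
        = algebraMap K A ((p ^ 2 : K) ^ (cartanD (k + 3) j)) *
            (f j * (((t (k + 3))⁻¹ : Aˣ) : A)) := by
      intro k hk
      have h0 := htf (k + 3) j (by omega) (by omega) hj1 hj2 trivial
      have h1 := conjInvA (t (k + 3)) (f j) _ (zpow_ne_zero _ hp2) h0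
      rwa [← zpow_neg, neg_neg, one_mul] at h1
    have hP := prod_conjA (f j) t (p ^ 2) hp2 (fun k => cartanD (k + 3) j) (n - 3)
      hinv (n - 3) le_rfl
    rw [← hPdef] at hP
    have h23 := conj_compA _ _ _ _ _ (hu2f j hj1 hj2) hP
    have h123 := conj_compA _ _ _ _ _ (hu1f j hj1 hj2) h23
    have hscal : c * (p ^ (cartanD 1 j) * (p ^ (cartanD 2 j) *
        (p ^ 2 : K) ^ (∑ k ∈ Finset.range (n - 3), cartanD (k + 3) j)))
        = (p ^ 2 : K) ^ (-(cartanD n j)) * c := by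
      rw [mul_comm]
      congr 1
      rw [hqz, hqz, ← zpow_add₀ hp, ← zpow_add₀ hp]
      congr 1
      have hks := key_sumD n hn j hj1 hj2
      omega
    rw [hTcoe, scommA, mul_assoc, h123, ← mul_assoc, ← map_mul, hscal, map_mul, mul_assoc]
  unfold UqRels
  refine ⟨?_, ?_, ?_, ?_, ?_, ?_, ?_⟩
  · -- t-t commutation
    intro i j h1 h2 h3 h4
    by_cases hi : i = n <;> by_cases hj : j = n
    · simp only [hi, hj, eq_self_iff_true, ite_true]
    · simp only [hi, hj, eq_self_iff_true, ite_true, ite_false]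
      exact (htc j h3 (by omega)).eq
    · simp only [hi, hj, eq_self_iff_true, ite_true, ite_false]
      exact ((htc i h1 (by omega)).symm).eq
    · simp only [hi, hj, ite_false]
      exact ht i j h1 (by omega) h3 (by omega)
  · -- t-e relations
    intro i j h1 h2 h3 h4
    by_cases hj : j = n
    · simp only [hj, eq_self_iff_true, ite_true]
      simp
    · by_cases hi : i = n
      · have hj2 : j ≤ n - 1 := by omega
        simp only [hi, hj, eq_self_iff_true, ite_true, ite_false, one_mul]
        exact hTne j h3 hj2
      · simp only [hi, hj, ite_false]
        exact hte i j h1 (by omega) h3 (by omega)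
  · -- t-f relations
    intro i j h1 h2 h3 h4 hSj
    by_cases hi : i = n
    · simp only [hi, eq_self_iff_true, ite_true, one_mul]
      exact hTnf j h3 (by omega)
    · simp only [hi, ite_false]
      exact htf i j h1 (by omega) h3 (by omega) trivial
  · -- e-f same index
    intro i h1 h2 hSi
    simp only [hSi, ite_false]
    exact hef i h1 (by omega) trivial
  · -- e-f different indices
    intro i j h1 h2 h3 h4 hSj hij
    by_cases hi : i = n
    · simp only [hi, eq_self_iff_true, ite_true, zero_mul, mul_zero]
    · simp only [hi, ite_false]
      exact hco i j h1 (by omega) h3 (by omega) trivial hij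
  · -- e-Serre
    intro i j h1 h2 h3 h4 hij
    by_cases hi : i = n
    · have hjn : j ≠ n := by omega
      simp only [hi, hjn, eq_self_iff_true, ite_true, ite_false]
      have hM : (1 - cartanD n j).toNat ≠ 0 := by
        have := cartanD_offdiag n j (by omega); omega
      apply Finset.sum_eq_zero
      intro v hv
      rcases Nat.eq_zero_or_pos v with h0 | h0
      · subst h0
        rw [Nat.sub_zero, zero_pow hM, zero_mul, zero_mul, mul_zero]
      · rw [zero_pow (by omega : v ≠ 0), mul_zero, mul_zero]
    · by_cases hj : j = n
      · simp only [hi, hj, eq_self_iff_true, ite_true, ite_false]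
        apply Finset.sum_eq_zero
        intro v hv
        rw [mul_zero, zero_mul, mul_zero]
      · simp only [hi, hj, ite_false]
        exact hse i j h1 (by omega) h3 (by omega) hij
  · -- f-Serre
    intro i j h1 h2 h3 h4 hSi hSj hij
    exact hsf i j h1 (by omega) h3 (by omega) trivial trivial hij
end
end
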